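/- Let p be a prime. Then every generalized Cayley graph on the cyclic group ℤ/2pℤ is a Cayley graph; that is, for every subset S ⊆ ℤ/2pℤ and every automorphism α of ℤ/2pℤ with α² = 1 such that α(x⁻¹)·x ∉ S for all x and α(S⁻¹) = S, the graph GC(ℤ/2pℤ, S, α) is isomorphic to a Cayley graph Cay(H, T) for some group H and subset T with 1 ∉ T and T⁻¹ = T. -/

import Mathlib

/-- The generalized Cayley graph `GC(G, S, α)`. -/
def GC {G : Type*} [Group G] (α : G ≃* G) (S : Set G)
    (h1 : ∀ x : G, α (α x) = x)
    (h2 : ∀ x : G, α x⁻¹ * x ∉ S)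
    (h3 : ⇑α '' S⁻¹ = S) : SimpleGraph G where
  Adj x y := α x⁻¹ * y ∈ S
  symm := by
    refine ⟨?_⟩
    intro x y hxy
    have hmem : (α x⁻¹ * y)⁻¹ ∈ S⁻¹ := by simpa [Set.mem_inv] using hxy
    have himg : α ((α x⁻¹ * y)⁻¹) ∈ ⇑α '' S⁻¹ := Set.mem_image_of_mem _ hmem
    rw [h3] at himg
    simpa [mul_inv_rev, map_mul, map_inv, h1] using himg
  loopless := ⟨fun x hx => h2 x hx⟩

/-- The Cayley graph `Cay(H, T)`. -/
def Cay {H : Type*} [Group H] (T : Set H) (hT1 : (1 : H) ∉ T) (hT2 : T⁻¹ = T) :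
    SimpleGraph H where
  Adj x y := x⁻¹ * y ∈ T
  symm := by
    refine ⟨?_⟩
    intro x y hxy
    have : (x⁻¹ * y)⁻¹ ∈ T⁻¹ := by simpa [Set.mem_inv] using hxy
    rw [hT2] at this
    simpa [mul_inv_rev] using this
  loopless := ⟨fun x hx => hT1 (by simpa using hx)⟩

/-- A representation of the graph `X` as a Cayley graph: a group, together with a
connection set `T` with `1 ∉ T` and `T⁻¹ = T`, whose Cayley graph is isomorphic to `X`. -/
structure CayleyRepn {V : Type*} (X : SimpleGraph V) where
  carrier : Type
  [group : Group carrier]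
  conn : Set carrier
  one_not_mem : (1 : carrier) ∉ conn
  inv_eq : conn⁻¹ = conn
  iso : Nonempty (X ≃g Cay conn one_not_mem inv_eq)

/-- A graph is a Cayley graph if it is isomorphic to `Cay(H, T)` for some group `H` and
some subset `T ⊆ H` with `1 ∉ T` and `T⁻¹ = T`. -/
def IsCayleyGraph {V : Type*} (X : SimpleGraph V) : Prop := Nonempty (CayleyRepn X)

/-!
An automorphism of `ℤ/2p` is multiplication by a unit `u`, and `α² = 1` forces `u² = 1`;
since `(ℤ/2p)ˣ` is cyclic, `u = ±1`. If `α = id`, then `GC(ℤ/2p, S, α) = Cay(ℤ/2p, S)`.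
If `α` is inversion, then `x ~ y` iff `x + y ∈ S`, and `S` contains no element of the form
`x + x`, i.e. no even residue. The bijection `ψ : D_p → ℤ/2p`, `rⁱ ↦ 2i`, `srⁱ ↦ 2i + 1`,
satisfies `ψ(x⁻¹y) = ψ x + ψ y` whenever one of `x, y` is a rotation and the other a reflection,
while for the remaining pairs both sides are even. Hence `ψ` is an isomorphism from
`Cay(D_p, ψ⁻¹ S)` onto the generalized Cayley graph.
-/

open Multiplicative

theorem isCayleyGraph_of_equiv {V : Type*} (X : SimpleGraph V) {H : Type} [Group H] (e : H ≃ V)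
    (T : Set H) (hadj : ∀ x y, X.Adj (e x) (e y) ↔ x⁻¹ * y ∈ T) : IsCayleyGraph X := by
  have one_not_mem : (1 : H) ∉ T := by simpa using (hadj 1 1).not.mp (X.loopless.irrefl _)
  have inv_eq : T⁻¹ = T := by
    ext t
    rw [Set.mem_inv, ← mul_one t⁻¹, ← hadj, X.adj_comm, hadj, inv_one, one_mul]
  refine ⟨⟨H, T, one_not_mem, inv_eq, ⟨⟨e.symm, fun {a b} => ?_⟩⟩⟩⟩
  change (e.symm a)⁻¹ * e.symm b ∈ T ↔ X.Adj a b
  rw [← hadj, e.apply_symm_apply, e.apply_symm_apply]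

theorem isCayleyGraph_GC_of_forall_eq_self {G : Type} [Group G] {α : G ≃* G} {S : Set G}
    (h1 : ∀ x : G, α (α x) = x) (h2 : ∀ x : G, α x⁻¹ * x ∉ S) (h3 : ⇑α '' S⁻¹ = S)
    (hα : ∀ x, α x = x) : IsCayleyGraph (GC α S h1 h2 h3) :=
  isCayleyGraph_of_equiv _ (Equiv.refl G) S fun x y => by
    change α x⁻¹ * y ∈ S ↔ _
    rw [hα]

theorem IsCyclic.eq_one_or_eq_of_sq_eq_one {G : Type*} [Group G] [Finite G] [IsCyclic G]
    {a x : G} (ha : a ≠ 1) (ha2 : a ^ 2 = 1) (hx : x ^ 2 = 1) : x = 1 ∨ x = a := by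
  classical
  have := Fintype.ofFinite G
  by_contra! h
  have hsub : ({1, a, x} : Finset G) ⊆ ({y | y ^ 2 = 1} : Finset G) := by
    intro y hy
    simp only [Finset.mem_insert, Finset.mem_singleton] at hy
    rcases hy with rfl | rfl | rfl <;> simp [*]
  have hcard : ({1, a, x} : Finset G).card = 3 :=
    Finset.card_eq_three.mpr ⟨1, a, x, ha.symm, Ne.symm h.1, Ne.symm h.2, rfl⟩
  have := (Finset.card_le_card hsub).trans (IsCyclic.card_pow_eq_one_le two_pos)
  omega

namespace ZMod

theorem exists_unit_toAdd_apply_eq_mul {n : ℕ}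
    (α : Multiplicative (ZMod n) ≃* Multiplicative (ZMod n)) :
    ∃ u : (ZMod n)ˣ, ∀ x, toAdd (α x) = u * toAdd x := by
  let f : AddAut (ZMod n) := AddEquiv.toMultiplicative.symm α
  refine ⟨(AddAutEquivUnits n f).toMul, fun x => ?_⟩
  have := congrArg (· (toAdd x)) ((AddAutEquivUnits n).symm_apply_apply f)
  simpa [f, Units.smul_def] using this.symm

theorem isCyclic_units_two_mul_prime {p : ℕ} (hp : p.Prime) : IsCyclic (ZMod (2 * p))ˣ := by
  rcases hp.eq_two_or_odd' with rfl | hodd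
  · exact isCyclic_units_four
  · exact (isCyclic_units_two_mul_iff_of_odd p hodd).mpr (isCyclic_units_prime hp)

theorem unit_eq_one_or_neg_one_of_sq_eq_one {p : ℕ} (hp : p.Prime) {u : (ZMod (2 * p))ˣ}
    (hu : u ^ 2 = 1) : u = 1 ∨ u = -1 := by
  have := isCyclic_units_two_mul_prime hp
  have : Fact (2 < 2 * p) := ⟨by have := hp.two_le; omega⟩
  have : NeZero (2 * p) := ⟨by have := hp.pos; omega⟩
  refine IsCyclic.eq_one_or_eq_of_sq_eq_one ?_ (by simp) hu
  exact fun h => neg_one_ne_one (congrArg Units.val h)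

theorem eq_self_or_eq_inv_of_involutive {p : ℕ} (hp : p.Prime)
    {α : Multiplicative (ZMod (2 * p)) ≃* Multiplicative (ZMod (2 * p))}
    (h1 : ∀ x, α (α x) = x) : (∀ x, α x = x) ∨ ∀ x, α x = x⁻¹ := by
  obtain ⟨u, hu⟩ := exists_unit_toAdd_apply_eq_mul α
  have hsq : u ^ 2 = 1 := by
    have := hu (α (ofAdd 1))
    rw [h1, hu] at this
    ext
    simpa [sq, mul_assoc] using this.symm
  rcases unit_eq_one_or_neg_one_of_sq_eq_one hp hsq with rfl | rfl
  · exact .inl fun x => toAdd.injective (by simpa using hu x)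
  · exact .inr fun x => toAdd.injective (by simpa using hu x)

def doubleHom (n : ℕ) : ZMod n →+ ZMod (2 * n) :=
  lift n ⟨zmultiplesHom _ 2, by simpa [mul_comm] using natCast_self (2 * n)⟩

variable {n : ℕ}

theorem doubleHom_natCast (k : ℕ) : doubleHom n k = 2 * k := by
  rw [← Int.cast_natCast, doubleHom, lift_coe]
  simp [mul_comm]

theorem doubleHom_one : doubleHom n 1 = 2 := by
  simpa using doubleHom_natCast (n := n) 1

theorem doubleHom_eq_add_self [NeZero n] (i : ZMod n) :
    doubleHom n i = (i.val : ZMod (2 * n)) + i.val := by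
  rw [← two_mul, ← doubleHom_natCast, natCast_zmod_val]

end ZMod

namespace DihedralGroup

open ZMod

variable {n : ℕ}

def toZModTwoMul (n : ℕ) : DihedralGroup n → ZMod (2 * n)
  | r i => doubleHom n i
  | sr i => doubleHom n i + 1

theorem toZModTwoMul_surjective [NeZero n] : Function.Surjective (toZModTwoMul n) := by
  intro z
  rw [← natCast_zmod_val z]
  obtain ⟨k, hk | hk⟩ := Nat.even_or_odd' z.val
  · exact ⟨r k, by simp [toZModTwoMul, doubleHom_natCast, hk]⟩
  · exact ⟨sr k, by simp [toZModTwoMul, doubleHom_natCast, hk]⟩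

theorem toZModTwoMul_bijective [NeZero n] : Function.Bijective (toZModTwoMul n) := by
  refine (Fintype.bijective_iff_surjective_and_card _).mpr ⟨toZModTwoMul_surjective, ?_⟩
  rw [DihedralGroup.card, ZMod.card]

theorem toZModTwoMul_inv_mul (x y : DihedralGroup n) :
    toZModTwoMul n (x⁻¹ * y) = toZModTwoMul n x + toZModTwoMul n y ∨
      toZModTwoMul n (x⁻¹ * y) ∈ (doubleHom n).range ∧
        toZModTwoMul n x + toZModTwoMul n y ∈ (doubleHom n).range := by
  rcases x with i | i <;> rcases y with j | j
  · exact .inr ⟨⟨-i + j, rfl⟩, ⟨i + j, map_add _ _ _⟩⟩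
  · left
    simp only [toZModTwoMul, r_mul_sr, inv_r, sub_neg_eq_add, map_add]
    abel
  · left
    simp only [toZModTwoMul, sr_mul_r, inv_sr, map_add]
    abel
  · right
    refine ⟨⟨_, rfl⟩, ⟨i + j + 1, ?_⟩⟩
    simp only [toZModTwoMul, map_add, doubleHom_one]
    ring

end DihedralGroup

open ZMod DihedralGroup in
theorem isCayleyGraph_GC_zmod_two_mul_of_forall_eq_inv {n : ℕ} [NeZero n]
    {α : Multiplicative (ZMod (2 * n)) ≃* Multiplicative (ZMod (2 * n))}
    {S : Set (Multiplicative (ZMod (2 * n)))} (h1 : ∀ x, α (α x) = x) (h2 : ∀ x, α x⁻¹ * x ∉ S)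
    (h3 : ⇑α '' S⁻¹ = S) (hα : ∀ x, α x = x⁻¹) : IsCayleyGraph (GC α S h1 h2 h3) := by
  let e := (Equiv.ofBijective _ (toZModTwoMul_bijective (n := n))).trans ofAdd
  have even_not_mem : ∀ z ∈ (doubleHom n).range, ofAdd z ∉ S := by
    rintro _ ⟨i, rfl⟩
    have := h2 (ofAdd (i.val : ZMod (2 * n)))
    rwa [hα, inv_inv, ← ofAdd_add, ← doubleHom_eq_add_self] at this
  refine isCayleyGraph_of_equiv _ e (e ⁻¹' S) fun x y => ?_
  change α (e x)⁻¹ * e y ∈ S ↔ ofAdd (toZModTwoMul n (x⁻¹ * y)) ∈ S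
  rw [hα, inv_inv]
  rcases toZModTwoMul_inv_mul x y with h | ⟨hl, hr⟩
  · rw [h, ofAdd_add]
    rfl
  · exact iff_of_false (even_not_mem _ hr) (even_not_mem _ hl)

/-- Every generalized Cayley graph on the cyclic group `ℤ/2pℤ`, `p` a
prime, is a Cayley graph. -/
theorem stmt_13 (p : ℕ) (hp : p.Prime)
    (α : Multiplicative (ZMod (2 * p)) ≃* Multiplicative (ZMod (2 * p)))
    (S : Set (Multiplicative (ZMod (2 * p))))
    (h1 : ∀ x : Multiplicative (ZMod (2 * p)), α (α x) = x)
    (h2 : ∀ x : Multiplicative (ZMod (2 * p)), α x⁻¹ * x ∉ S)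
    (h3 : ⇑α '' S⁻¹ = S) :
    IsCayleyGraph (GC α S h1 h2 h3) := by
  have : NeZero p := ⟨hp.ne_zero⟩
  rcases ZMod.eq_self_or_eq_inv_of_involutive hp h1 with hα | hα
  · exact isCayleyGraph_GC_of_forall_eq_self h1 h2 h3 hα
  · exact isCayleyGraph_GC_zmod_two_mul_of_forall_eq_inv h1 h2 h3 hα
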